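/- Let G be the infinite ternary word that is the fixed point, starting with 0, of the morphism γ defined by γ(0)=01, γ(1)=2, γ(2)=02 (so G = 012020102012010201202⋯). Then p_G(n) = 2n + 1 for all n ≥ 0. -/

import Mathlib

/-- The factor of the infinite word `u` of length `m` starting at position `i`. -/
def factorAt {k : ℕ} (u : ℕ → Fin k) (i m : ℕ) : List (Fin k) :=
  (List.range m).map fun j => u (i + j)

/-- `v` is a factor of the infinite word `u`. -/
def IsFactor {k : ℕ} (v : List (Fin k)) (u : ℕ → Fin k) : Prop :=
  ∃ i, v = factorAt u i v.length

/-- Subword complexity: the number of distinct factors of length `n`. -/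
noncomputable def complexity {k : ℕ} (u : ℕ → Fin k) (n : ℕ) : ℕ :=
  Set.ncard {v : List (Fin k) | v.length = n ∧ IsFactor v u}

/-- The word `w` has period `q` (`1 ≤ q ≤ |w|`, and `w(i) = w(i+q)` whenever defined). -/
def HasPer {A : Type*} (w : List A) (q : ℕ) : Prop :=
  1 ≤ q ∧ q ≤ w.length ∧ ∀ i, i + q < w.length → w[i]? = w[i + q]?

/-- The minimal period of a finite word. -/
noncomputable def minPer {A : Type*} (w : List A) : ℕ := sInf {q | HasPer w q}

/-- The exponent of a finite word: its length divided by its minimal period. -/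
noncomputable def exponent {A : Type*} (w : List A) : ℝ := (w.length : ℝ) / (minPer w : ℝ)

/-- `u` is `α`-power-free: no nonempty factor has exponent `≥ α`. -/
def PowerFree {k : ℕ} (α : ℝ) (u : ℕ → Fin k) : Prop :=
  ∀ v : List (Fin k), v ≠ [] → IsFactor v u → exponent v < α

/-- `u` is `α⁺`-power-free: no nonempty factor has exponent `> α`. -/
def PowerFreePlus {k : ℕ} (α : ℝ) (u : ℕ → Fin k) : Prop :=
  ∀ v : List (Fin k), v ≠ [] → IsFactor v u → exponent v ≤ α

/-- Overlap-free means `2⁺`-power-free. -/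
def OverlapFree {k : ℕ} (u : ℕ → Fin k) : Prop := PowerFreePlus 2 u

/-- The Thue–Morse word: `t n` is the number of 1's, mod 2, in the binary expansion of `n`. -/
def thueMorse : ℕ → Fin 2 := fun n => Fin.ofNat 2 ((Nat.digits 2 n).count 1)

/-- The morphism γ: 0 → 01, 1 → 2, 2 → 02. -/
def gammaM (w : List (Fin 3)) : List (Fin 3) :=
  w.flatMap fun a => if a = 0 then [0, 1] else if a = 1 then [2] else [0, 2]

/-- The word G: the fixed point of γ starting with 0. -/
def Gword : ℕ → Fin 3 := fun n => ((gammaM^[n + 1]) [0]).getD n 0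

/-!
Since `G = γ(G)`, the word `G` is cut into blocks `γ(G k) ∈ {01, 2, 02}`, the `k`-th one
starting at position `cut k`, and a factor occurring at the end of a block desubstitutes into
`s γ(v)` with `|s| ≤ 1`. The only two-letter factors are `01, 02, 10, 12, 20`, so a nonempty
right special factor has two right extensions, `{1, 2}` (and ends with `0`) or `{0, 2}` (and
ends with `1`). Desubstitution turns a right special factor of one kind into a shorter one of
the other kind, and by strong induction on the length all of them are suffixes of the words
`Pₖ`, `Qₖ` with `P₀ = 0`, `Q₀ = 1`, `Pₖ₊₁ = γ(Qₖ)0`, `Qₖ₊₁ = γ(Pₖ)`. Hence each length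
`n ≥ 1` has exactly one right special factor of each kind, and `p(n + 1) = p(n) + 2`.
-/

section Words

variable {k : ℕ} (u : ℕ → Fin k)

@[simp] lemma length_factorAt (i m : ℕ) : (factorAt u i m).length = m := by
  simp [factorAt]

lemma factorAt_add (i a b : ℕ) :
    factorAt u i (a + b) = factorAt u i a ++ factorAt u (i + a) b := by
  simp [factorAt, List.range_add, Nat.add_assoc]

@[simp] lemma factorAt_zero (i : ℕ) : factorAt u i 0 = [] := rfl

@[simp] lemma factorAt_one (i : ℕ) : factorAt u i 1 = [u i] := by
  simp [factorAt]

lemma factorAt_succ (i m : ℕ) : factorAt u i (m + 1) = factorAt u i m ++ [u (i + m)] := by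
  rw [factorAt_add, factorAt_one]

lemma factorAt_succ' (i m : ℕ) : factorAt u i (m + 1) = u i :: factorAt u (i + 1) m := by
  rw [Nat.add_comm, factorAt_add, factorAt_one, List.singleton_append]

lemma isFactor_factorAt (i m : ℕ) : IsFactor (factorAt u i m) u :=
  ⟨i, by simp⟩

variable {u}

lemma eq_factorAt_append {w t : List (Fin k)} {i : ℕ}
    (h : w ++ t = factorAt u i (w ++ t).length) :
    w = factorAt u i w.length ∧ t = factorAt u (i + w.length) t.length := by
  rw [List.length_append, factorAt_add] at h
  exact List.append_inj h (by simp)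

lemma IsFactor.of_infix {v w : List (Fin k)} (hw : IsFactor w u) (h : v <:+: w) :
    IsFactor v u := by
  obtain ⟨i, hi⟩ := hw
  obtain ⟨s, t, rfl⟩ := h
  obtain ⟨hi, -⟩ := eq_factorAt_append hi
  exact ⟨i + s.length, (eq_factorAt_append hi).2⟩

lemma IsFactor.exists_append_singleton {w : List (Fin k)} (hw : IsFactor w u) :
    ∃ a, IsFactor (w ++ [a]) u := by
  obtain ⟨i, hi⟩ := hw
  exact ⟨u (i + w.length), i, by simp [factorAt_succ, ← hi]⟩

lemma complexity_zero : complexity u 0 = 1 := by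
  have : {v : List (Fin k) | v.length = 0 ∧ IsFactor v u} = {[]} := by
    ext v
    simp only [Set.mem_ofPred_eq, List.length_eq_zero_iff, Set.mem_singleton_iff,
      and_iff_left_iff_imp]
    rintro rfl
    exact ⟨0, rfl⟩
  rw [complexity, this, Set.ncard_singleton]

variable (u)

/-- Each factor of length `n` contributes its number of right extensions minus one. -/
def nonminimalExtensions (n : ℕ) : Set (List (Fin k)) :=
  {v | ∃ w a b, v = w ++ [a] ∧ w.length = n ∧ b < a ∧ IsFactor (w ++ [a]) u ∧
    IsFactor (w ++ [b]) u}

lemma complexity_succ (n : ℕ) :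
    complexity u (n + 1) = complexity u n + (nonminimalExtensions u n).ncard := by
  set F : ℕ → Set (List (Fin k)) := fun m => {v | v.length = m ∧ IsFactor v u}
  have hfin : (F (n + 1)).Finite :=
    (List.finite_length_eq (Fin k) (n + 1)).subset fun v hv => hv.1
  have hsub : nonminimalExtensions u n ⊆ F (n + 1) := by
    rintro _ ⟨w, a, b, rfl, hw, -, ha, -⟩
    exact ⟨by simp [hw], ha⟩
  -- dropping the last letter maps the minimal right extensions bijectively onto `F n`
  have hbij : (F (n + 1) \ nonminimalExtensions u n).ncard = (F n).ncard := by
    refine Set.ncard_congr (fun v _ => v.dropLast) ?_ ?_ ?_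
    · rintro v ⟨⟨hv, hvu⟩, -⟩
      exact ⟨by simp [hv], hvu.of_infix (List.dropLast_prefix v).isInfix⟩
    · rintro v v' ⟨⟨hv, hvu⟩, hvE⟩ ⟨⟨hv', hv'u⟩, hv'E⟩ h
      obtain ⟨w, a, rfl⟩ := (List.eq_nil_or_concat' v).resolve_left (by grind)
      obtain ⟨w', a', rfl⟩ := (List.eq_nil_or_concat' v').resolve_left (by grind)
      simp only [List.dropLast_concat] at h
      subst h
      rcases lt_trichotomy a a' with hlt | rfl | hlt
      · exact absurd ⟨w, a', a, rfl, by simpa using hv, hlt, hv'u, hvu⟩ hv'E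
      · rfl
      · exact absurd ⟨w, a, a', rfl, by simpa using hv, hlt, hvu, hv'u⟩ hvE
    · rintro w ⟨hw, hwu⟩
      obtain ⟨a, ha, hmin⟩ := wellFounded_lt.has_min {a | IsFactor (w ++ [a]) u}
        hwu.exists_append_singleton
      refine ⟨w ++ [a], ⟨⟨by simp [hw], ha⟩, ?_⟩, by simp⟩
      rintro ⟨w', a', b, he, -, hb, -, hbu⟩
      obtain ⟨rfl, h⟩ := List.append_inj' he rfl
      obtain rfl : a = a' := by simpa using h
      exact hmin b hbu hb
  change (F (n + 1)).ncard = (F n).ncard + _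
  rw [← Set.ncard_sdiff_add_ncard_of_subset hsub hfin, hbij]

end Words

lemma fin3_cases (a : Fin 3) : a = 0 ∨ a = 1 ∨ a = 2 := by
  fin_cases a <;> simp

section Morphism

@[simp] lemma gammaM_nil : gammaM [] = [] := rfl

@[simp] lemma gammaM_append (v w : List (Fin 3)) :
    gammaM (v ++ w) = gammaM v ++ gammaM w := by
  simp [gammaM]

lemma gammaM_cons (a : Fin 3) (v : List (Fin 3)) :
    gammaM (a :: v) = gammaM [a] ++ gammaM v := by
  simp [gammaM]

@[simp] lemma gammaM_zero : gammaM [0] = [0, 1] := rfl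

@[simp] lemma gammaM_one : gammaM [1] = [2] := rfl

@[simp] lemma gammaM_two : gammaM [2] = [0, 2] := rfl

lemma length_le_length_gammaM (w : List (Fin 3)) : w.length ≤ (gammaM w).length := by
  induction w with
  | nil => simp
  | cons a w ih =>
    have : 1 ≤ (gammaM [a]).length := by obtain rfl | rfl | rfl := fin3_cases a <;> simp
    rw [gammaM_cons, List.length_append, List.length_cons]
    omega

lemma gammaM_singleton_append_inj {a b : Fin 3} {v w : List (Fin 3)}
    (h : gammaM [a] ++ v = gammaM [b] ++ w) : a = b ∧ v = w := by
  obtain rfl | rfl | rfl := fin3_cases a <;> obtain rfl | rfl | rfl := fin3_cases b <;> simp_all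

lemma gammaM_ne_nil_of_ne_nil {v : List (Fin 3)} (hv : v ≠ []) : gammaM v ≠ [] := by
  obtain ⟨a, v, rfl⟩ := List.exists_cons_of_ne_nil hv
  obtain rfl | rfl | rfl := fin3_cases a <;> simp [gammaM_cons _ v]

lemma gammaM_injective : Function.Injective gammaM := by
  intro v
  induction v with
  | nil => intro w h; by_contra hw; exact gammaM_ne_nil_of_ne_nil (Ne.symm hw) h.symm
  | cons a v ih =>
    rintro (_ | ⟨b, w⟩) h
    · exact absurd h (gammaM_ne_nil_of_ne_nil (List.cons_ne_nil a v))
    · rw [gammaM_cons, gammaM_cons b] at h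
      obtain ⟨rfl, hvw⟩ := gammaM_singleton_append_inj h
      rw [ih hvw]

lemma gammaM_prefix {v w : List (Fin 3)} (h : v <+: w) : gammaM v <+: gammaM w := by
  obtain ⟨t, rfl⟩ := h
  exact ⟨gammaM t, (gammaM_append v t).symm⟩

lemma gammaM_suffix {v w : List (Fin 3)} (h : v <:+ w) : gammaM v <:+ gammaM w := by
  obtain ⟨t, rfl⟩ := h
  exact ⟨gammaM t, (gammaM_append t v).symm⟩

lemma singleton_suffix_gammaM_iff (x z : Fin 3) :
    [x] <:+ gammaM [z] ↔ x = if z = 0 then 1 else 2 := by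
  fin_cases z <;> fin_cases x <;> decide

end Morphism

def iterWord (n : ℕ) : List (Fin 3) := gammaM^[n] [0]

lemma iterWord_succ (n : ℕ) : iterWord (n + 1) = gammaM (iterWord n) :=
  Function.iterate_succ_apply' _ _ _

lemma iterWord_prefix_succ (n : ℕ) : iterWord n <+: iterWord (n + 1) := by
  induction n with
  | zero => exact ⟨[1], rfl⟩
  | succ n ih => rw [iterWord_succ, iterWord_succ (n + 1)]; exact gammaM_prefix ih

lemma iterWord_prefix {m n : ℕ} (h : m ≤ n) : iterWord m <+: iterWord n := by
  induction n, h using Nat.le_induction with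
  | base => exact List.prefix_refl _
  | succ n _ ih => exact ih.trans (iterWord_prefix_succ n)

lemma lt_length_iterWord (n : ℕ) : n < (iterWord n).length := by
  induction n with
  | zero => simp [iterWord]
  | succ n ih =>
    obtain ⟨t, ht⟩ := iterWord_prefix (Nat.zero_le n)
    have := length_le_length_gammaM t
    rw [← ht, show iterWord 0 = [0] from rfl] at ih
    rw [iterWord_succ, ← ht, show iterWord 0 = [0] from rfl, List.singleton_append,
      gammaM_cons]
    simp only [List.length_cons, List.length_append, gammaM_zero] at ih ⊢
    omega

lemma Gword_eq_getElem {n k : ℕ} (h : n < (iterWord k).length) :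
    Gword n = (iterWord k)[n] := by
  have hn : n < (iterWord (n + 1)).length := (lt_length_iterWord (n + 1)).trans' (by omega)
  change (iterWord (n + 1)).getD n 0 = _
  rw [List.getD_eq_getElem _ _ hn]
  rcases le_total (n + 1) k with hk | hk
  · exact (iterWord_prefix hk).getElem hn
  · exact ((iterWord_prefix hk).getElem h).symm

lemma factorAt_Gword_zero_of_prefix {p : List (Fin 3)} {k : ℕ} (h : p <+: iterWord k) :
    factorAt Gword 0 p.length = p := by
  refine List.ext_getElem (by simp) fun j hj hj' => ?_
  simp only [factorAt, List.getElem_map, List.getElem_range, zero_add]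
  rw [Gword_eq_getElem (hj'.trans_le h.length_le), h.getElem]

/-- `cut n` is the position in `G = γ(G)` where the image of the letter `G n` starts. -/
def cut (n : ℕ) : ℕ := (gammaM (factorAt Gword 0 n)).length

lemma gammaM_factorAt_zero (n : ℕ) :
    gammaM (factorAt Gword 0 n) = factorAt Gword 0 (cut n) := by
  have hpre : factorAt Gword 0 n <+: iterWord n := by
    have h := factorAt_Gword_zero_of_prefix (List.take_prefix n (iterWord n))
    rw [List.length_take, min_eq_left (lt_length_iterWord n).le] at h
    exact h ▸ List.take_prefix n _
  exact (factorAt_Gword_zero_of_prefix (iterWord_succ n ▸ gammaM_prefix hpre)).symm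

lemma cut_add (i m : ℕ) : cut (i + m) = cut i + (gammaM (factorAt Gword i m)).length := by
  simp [cut, factorAt_add]

lemma gammaM_factorAt (i m : ℕ) :
    gammaM (factorAt Gword i m) =
      factorAt Gword (cut i) (gammaM (factorAt Gword i m)).length := by
  have h := gammaM_factorAt_zero (i + m)
  rw [factorAt_add, zero_add, gammaM_append, cut_add, factorAt_add, ← gammaM_factorAt_zero,
    zero_add] at h
  exact List.append_cancel_left h

lemma IsFactor.gammaM {w : List (Fin 3)} (h : IsFactor w Gword) :
    IsFactor (gammaM w) Gword := by
  obtain ⟨i, hi⟩ := h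
  exact ⟨cut i, hi ▸ gammaM_factorAt i w.length⟩

@[simp] lemma cut_zero : cut 0 = 0 := rfl

lemma cut_succ (k : ℕ) : cut (k + 1) = cut k + (gammaM [Gword k]).length := by
  simp [cut_add]

lemma cut_strictMono : StrictMono cut :=
  strictMono_nat_of_lt_succ fun k => by
    have : 1 ≤ (gammaM [Gword k]).length := length_le_length_gammaM [Gword k]
    rw [cut_succ]; omega

lemma block_cases (k : ℕ) :
    (Gword k = 0 ∧ Gword (cut k) = 0 ∧ Gword (cut k + 1) = 1 ∧ cut (k + 1) = cut k + 2) ∨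
    (Gword k = 1 ∧ Gword (cut k) = 2 ∧ cut (k + 1) = cut k + 1) ∨
    (Gword k = 2 ∧ Gword (cut k) = 0 ∧ Gword (cut k + 1) = 2 ∧ cut (k + 1) = cut k + 2) := by
  have h : factorAt Gword (cut k) (gammaM [Gword k]).length = gammaM [Gword k] := by
    simpa using (gammaM_factorAt k 1).symm
  rw [cut_succ]
  generalize Gword k = a at h ⊢
  fin_cases a <;> simp_all [factorAt, List.range_succ]

lemma Gword_cut (k : ℕ) : Gword (cut k) = if Gword k = 1 then 2 else 0 := by
  rcases block_cases k with h | h | h <;> simp [h]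

lemma exists_cut_le_lt (p : ℕ) : ∃ k, cut k ≤ p ∧ p < cut (k + 1) := by
  classical
  have hex : ∃ k, p < cut (k + 1) :=
    ⟨p, Nat.lt_of_lt_of_le (Nat.lt_succ_self p) (cut_strictMono.id_le _)⟩
  refine ⟨Nat.find hex, ?_, Nat.find_spec hex⟩
  rcases h : Nat.find hex with _ | k
  · simp
  · exact not_lt.mp (Nat.find_min hex (m := k) (by omega))

lemma exists_position_in_block (p : ℕ) : ∃ k,
    (p = cut k ∧ Gword p = if Gword k = 1 then 2 else 0) ∨
    (Gword k = 0 ∧ p = cut k + 1 ∧ cut (k + 1) = p + 1 ∧ Gword p = 1) ∨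
    (Gword k = 2 ∧ p = cut k + 1 ∧ cut (k + 1) = p + 1 ∧ Gword p = 2) := by
  obtain ⟨k, h₁, h₂⟩ := exists_cut_le_lt p
  refine ⟨k, ?_⟩
  rcases h₁.eq_or_lt with rfl | h₁
  · exact Or.inl ⟨rfl, Gword_cut k⟩
  · have hp : p = cut k + 1 := by rcases block_cases k with h | h | h <;> omega
    rcases block_cases k with h | h | h
    · exact Or.inr (Or.inl ⟨h.1, hp, by omega, hp ▸ h.2.2.1⟩)
    · omega
    · exact Or.inr (Or.inr ⟨h.1, hp, by omega, hp ▸ h.2.2.1⟩)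

lemma exists_cut_eq_of_Gword_eq_zero {p : ℕ} (h : Gword p = 0) : ∃ k, cut k = p := by
  obtain ⟨k, ⟨hp, -⟩ | ⟨-, -, -, h'⟩ | ⟨-, -, -, h'⟩⟩ := exists_position_in_block p
  · exact ⟨k, hp.symm⟩
  all_goals simp [h] at h'

lemma exists_of_Gword_eq_one {p : ℕ} (h : Gword p = 1) :
    ∃ k, Gword k = 0 ∧ cut k + 1 = p ∧ cut (k + 1) = p + 1 := by
  obtain ⟨k, ⟨-, h'⟩ | ⟨hk, hp, hc, -⟩ | ⟨-, -, -, h'⟩⟩ := exists_position_in_block p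
  · rw [h] at h'; split_ifs at h' <;> simp at h'
  · exact ⟨k, hk, hp.symm, hc⟩
  · simp [h] at h'

lemma Gword_eq_zero_of_succ_eq_one {p : ℕ} (h : Gword (p + 1) = 1) : Gword p = 0 := by
  obtain ⟨k, hk, hp, -⟩ := exists_of_Gword_eq_one h
  rcases block_cases k with h' | h' | h' <;> simp_all [show p = cut k by omega]

lemma Gword_succ_ne (p : ℕ) : Gword (p + 1) ≠ Gword p := by
  obtain ⟨k, ⟨rfl, -⟩ | ⟨hk, rfl, hc, hp⟩ | ⟨hk, rfl, hc, hp⟩⟩ := exists_position_in_block p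
  · rcases block_cases k with h | h | h
    · simp [h]
    · have : Gword (k + 1) ≠ 1 := fun h' => by simp [Gword_eq_zero_of_succ_eq_one h'] at h
      rw [← h.2.2, Gword_cut, if_neg this, h.2.1]; decide
    · simp [h]
  · rw [← hc, Gword_cut, hp]; split_ifs <;> decide
  · have : Gword (k + 1) ≠ 1 := fun h' => by simp [Gword_eq_zero_of_succ_eq_one h'] at hk
    rw [← hc, Gword_cut, if_neg this, hp]; decide

lemma exists_of_isFactor_pair {a b : Fin 3} (h : IsFactor [a, b] Gword) :
    ∃ i, Gword i = a ∧ Gword (i + 1) = b := by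
  obtain ⟨i, hi⟩ := h
  simp only [List.length_cons, List.length_nil, zero_add, Nat.reduceAdd, factorAt_succ',
    factorAt_zero, List.cons.injEq, and_true] at hi
  exact ⟨i, hi.1.symm, hi.2.symm⟩

lemma ne_of_isFactor_pair {a b : Fin 3} (h : IsFactor [a, b] Gword) : a ≠ b := by
  obtain ⟨i, rfl, rfl⟩ := exists_of_isFactor_pair h
  exact (Gword_succ_ne i).symm

lemma eq_zero_of_isFactor_pair_one {a : Fin 3} (h : IsFactor [a, 1] Gword) : a = 0 := by
  obtain ⟨i, rfl, h1⟩ := exists_of_isFactor_pair h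
  exact Gword_eq_zero_of_succ_eq_one h1

lemma not_isFactor_zero_cons_and_two_cons {v : List (Fin 3)} (hv : v ≠ [])
    (h₀ : IsFactor (0 :: v) Gword) (h₂ : IsFactor (2 :: v) Gword) : False := by
  obtain ⟨b, t, rfl⟩ := List.exists_cons_of_ne_nil hv
  have hb₀ := ne_of_isFactor_pair (h₀.of_infix ⟨[], t, rfl⟩)
  have hb₂ := ne_of_isFactor_pair (h₂.of_infix ⟨[], t, rfl⟩)
  have hb₁ : b ≠ 1 := by
    rintro rfl
    exact absurd (eq_zero_of_isFactor_pair_one (h₂.of_infix ⟨[], t, rfl⟩)) (by decide)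
  obtain rfl | rfl | rfl := fin3_cases b <;> simp_all

/-- In an occurrence of `w` that ends at a block boundary, `lead w` is what precedes the
complete blocks; a leading `2` is put here even when it is the block `γ(1)`, which makes the
decomposition `w = lead w ++ γ(v)` unique. -/
def lead : List (Fin 3) → List (Fin 3)
  | [] => []
  | x :: _ => if x = 0 then [] else [x]

lemma length_lead_le (w : List (Fin 3)) : (lead w).length ≤ 1 := by
  cases w with
  | nil => simp [lead]
  | cons x t => simp only [lead]; split_ifs <;> simp

/-- `v` is the preimage under `γ` of an occurrence of `w` that ends where the block `γ(d)`
starts, and `z` is the letter whose block ends with the leading letter of `w`. -/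
def IsDesubstitution (w v : List (Fin 3)) (d : Fin 3) : Prop :=
  w = lead w ++ gammaM v ∧ IsFactor (v ++ [d]) Gword ∧
    ∀ x, lead w = [x] → ∃ z, [x] <:+ gammaM [z] ∧ IsFactor (z :: v ++ [d]) Gword

lemma IsDesubstitution.eq {w v v' : List (Fin 3)} {d d' : Fin 3}
    (h : IsDesubstitution w v d) (h' : IsDesubstitution w v' d') : v = v' :=
  gammaM_injective (List.append_cancel_left (h.1.symm.trans h'.1))

lemma exists_isDesubstitution_gammaM {v₀ : List (Fin 3)} {d : Fin 3}
    (h : IsFactor (v₀ ++ [d]) Gword) : ∃ v, IsDesubstitution (gammaM v₀) v d := by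
  rcases v₀ with _ | ⟨y, t⟩
  · exact ⟨[], by simp [lead], by simpa using h, by simp [lead]⟩
  · rw [gammaM_cons]
    obtain rfl | rfl | rfl := fin3_cases y
    · exact ⟨0 :: t, by simp [lead, gammaM_cons 0 t], h, by simp [lead]⟩
    · refine ⟨t, by simp [lead], h.of_infix ⟨[1], [], by simp⟩, fun x hx => ?_⟩
      obtain rfl : x = 2 := by simpa [lead] using hx.symm
      exact ⟨1, by simp, by simpa using h⟩
    · exact ⟨2 :: t, by simp [lead, gammaM_cons 2 t], h, by simp [lead]⟩

lemma exists_isDesubstitution {w : List (Fin 3)} {i k : ℕ}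
    (hw : w = factorAt Gword i w.length) (hk : i + w.length = cut k) :
    ∃ v, IsDesubstitution w v (Gword k) := by
  obtain ⟨q, ⟨rfl, -⟩ | ⟨hq, rfl, hc, hx⟩ | ⟨hq, rfl, hc, hx⟩⟩ := exists_position_in_block i
  · have hqk : q ≤ k := cut_strictMono.le_iff_le.mp (by omega)
    have hv₀ := isFactor_factorAt Gword q (k - q + 1)
    rw [factorAt_succ, Nat.add_sub_cancel' hqk] at hv₀
    have hlen := cut_add q (k - q)
    rw [Nat.add_sub_cancel' hqk] at hlen
    have hγ := gammaM_factorAt q (k - q)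
    rw [show (gammaM (factorAt Gword q (k - q))).length = w.length by omega, ← hw] at hγ
    exact hγ ▸ exists_isDesubstitution_gammaM hv₀
  all_goals
    have hqk : q + 1 ≤ k := cut_strictMono.lt_iff_lt.mp (by omega)
    have hv := isFactor_factorAt Gword q (k - (q + 1) + 1 + 1)
    rw [factorAt_succ', factorAt_succ, show q + 1 + (k - (q + 1)) = k by omega] at hv
    have hlen := cut_add (q + 1) (k - (q + 1))
    have hγ := gammaM_factorAt (q + 1) (k - (q + 1))
    set v := factorAt Gword (q + 1) (k - (q + 1))
    rw [Nat.add_sub_cancel' hqk] at hlen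
    rw [show w.length = (gammaM v).length + 1 by omega, factorAt_succ', ← hc, ← hγ, hx] at hw
    refine ⟨v, by rw [hw]; simp [lead], hv.of_infix ⟨[Gword q], [], by simp⟩, ?_⟩
    rw [hw]
    rintro x hx'
    obtain rfl : _ = x := by simpa [lead] using hx'
    exact ⟨Gword q, by simp [hq], hv⟩

lemma exists_isDesubstitution_of_append_zero {w : List (Fin 3)} {c : Fin 3}
    (h : IsFactor (w ++ [0, c]) Gword) :
    ∃ v d, gammaM [d] = [0, c] ∧ IsDesubstitution w v d := by
  obtain ⟨i, hi⟩ := h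
  obtain ⟨hw, hc⟩ := eq_factorAt_append hi
  rw [List.length_cons, List.length_singleton, factorAt_succ', factorAt_one,
    List.cons.injEq, List.singleton_inj] at hc
  obtain ⟨k, hk⟩ := exists_cut_eq_of_Gword_eq_zero hc.1.symm
  obtain ⟨v, hv⟩ := exists_isDesubstitution hw hk.symm
  refine ⟨v, Gword k, ?_, hv⟩
  rw [hc.2, ← hk]
  have h₀ : Gword (cut k) = 0 := hk ▸ hc.1.symm
  rcases block_cases k with ⟨h, -, h', -⟩ | ⟨-, h, -⟩ | ⟨h, -, h', -⟩
  · simp [h, h']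
  · simp [h] at h₀
  · simp [h, h']

lemma exists_isDesubstitution_of_one_append {w : List (Fin 3)} {c : Fin 3}
    (h : IsFactor (w ++ [1, c]) Gword) :
    ∃ v d, d ≠ 0 ∧ [c] <+: gammaM [d] ∧ IsDesubstitution (w ++ [1]) v d := by
  obtain ⟨i, hi⟩ := h
  rw [show w ++ [1, c] = w ++ [1] ++ [c] by simp] at hi
  obtain ⟨hw, hc⟩ := eq_factorAt_append hi
  obtain ⟨-, h₁⟩ := eq_factorAt_append hw
  rw [List.length_singleton, factorAt_one, List.singleton_inj] at h₁ hc
  obtain ⟨q, hq, -, hq'⟩ := exists_of_Gword_eq_one h₁.symm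
  have hlen : (w ++ [1]).length = w.length + 1 := by
    rw [List.length_append, List.length_singleton]
  obtain ⟨v, hv⟩ := exists_isDesubstitution hw (k := q + 1) (by omega)
  have hne : Gword (q + 1) ≠ 0 := hq ▸ Gword_succ_ne q
  refine ⟨v, Gword (q + 1), hne, ?_, hv⟩
  have := Gword_cut (q + 1)
  rw [hq', show i + w.length + 1 = i + (w ++ [1]).length by omega, ← hc] at this
  rw [this]
  generalize Gword (q + 1) = d at hne ⊢
  obtain rfl | rfl | rfl := fin3_cases d <;> simp at hne ⊢

def RightSpecial (a b : Fin 3) (w : List (Fin 3)) : Prop :=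
  IsFactor (w ++ [a]) Gword ∧ IsFactor (w ++ [b]) Gword

namespace RightSpecial

lemma of_suffix {a b : Fin 3} {w w' : List (Fin 3)} (h : RightSpecial a b w) (hw : w' <:+ w) :
    RightSpecial a b w' :=
  ⟨h.1.of_infix (List.suffix_append_self_iff.2 hw).isInfix,
    h.2.of_infix (List.suffix_append_self_iff.2 hw).isInfix⟩

lemma exists_eq_append_zero {w : List (Fin 3)} (h : RightSpecial 1 2 w) (hw : w ≠ []) :
    ∃ t, w = t ++ [0] := by
  obtain ⟨t, l, rfl⟩ := (List.eq_nil_or_concat' w).resolve_left hw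
  exact ⟨t, by rw [eq_zero_of_isFactor_pair_one (a := l) (h.1.of_infix ⟨t, [], by simp⟩)]⟩

lemma exists_eq_append_one {w : List (Fin 3)} (h : RightSpecial 0 2 w) (hw : w ≠ []) :
    ∃ t, w = t ++ [1] := by
  obtain ⟨t, l, rfl⟩ := (List.eq_nil_or_concat' w).resolve_left hw
  have h₀ := ne_of_isFactor_pair (a := l) (b := 0) (h.1.of_infix ⟨t, [], by simp⟩)
  have h₂ := ne_of_isFactor_pair (a := l) (b := 2) (h.2.of_infix ⟨t, [], by simp⟩)
  exact ⟨t, by obtain rfl | rfl | rfl := fin3_cases l <;> simp_all⟩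

lemma exists_isDesubstitution_zero_two {w : List (Fin 3)} (h : RightSpecial 1 2 (w ++ [0])) :
    ∃ v, IsDesubstitution w v 0 ∧ IsDesubstitution w v 2 := by
  obtain ⟨v, d, hd, hv⟩ := exists_isDesubstitution_of_append_zero (c := 1) (by simpa using h.1)
  obtain ⟨v', d', hd', hv'⟩ :=
    exists_isDesubstitution_of_append_zero (c := 2) (by simpa using h.2)
  obtain rfl : d = 0 := by obtain rfl | rfl | rfl := fin3_cases d <;> simp_all
  obtain rfl : d' = 2 := by obtain rfl | rfl | rfl := fin3_cases d' <;> simp_all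
  exact ⟨v, hv, hv.eq hv' ▸ hv'⟩

lemma exists_isDesubstitution_one_two {w : List (Fin 3)} (h : RightSpecial 0 2 (w ++ [1])) :
    ∃ v, IsDesubstitution (w ++ [1]) v 1 ∧ IsDesubstitution (w ++ [1]) v 2 := by
  obtain ⟨v, d, hd₀, hd, hv⟩ :=
    exists_isDesubstitution_of_one_append (c := 2) (by simpa using h.2)
  obtain ⟨v', d', hd₀', hd', hv'⟩ :=
    exists_isDesubstitution_of_one_append (c := 0) (by simpa using h.1)
  obtain rfl : d = 1 := by obtain rfl | rfl | rfl := fin3_cases d <;> simp_all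
  obtain rfl : d' = 2 := by obtain rfl | rfl | rfl := fin3_cases d' <;> simp_all
  exact ⟨v, hv, hv.eq hv' ▸ hv'⟩

end RightSpecial

def specialChains : ℕ → List (Fin 3) × List (Fin 3)
  | 0 => ([0], [1])
  | k + 1 => (gammaM (specialChains k).2 ++ [0], gammaM (specialChains k).1)

def chainA (k : ℕ) : List (Fin 3) := (specialChains k).1

def chainB (k : ℕ) : List (Fin 3) := (specialChains k).2

lemma chainA_succ (k : ℕ) : chainA (k + 1) = gammaM (chainB k) ++ [0] := rfl

lemma chainB_succ (k : ℕ) : chainB (k + 1) = gammaM (chainA k) := rfl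

structure SpecialChain (a b : Fin 3) (C : ℕ → List (Fin 3)) : Prop where
  suffix_succ : ∀ k, C k <:+ C (k + 1)
  lt_length : ∀ k, k < (C k).length
  rightSpecial : ∀ k, RightSpecial a b (C k)

lemma chains_suffix_succ (k : ℕ) :
    chainA k <:+ chainA (k + 1) ∧ chainB k <:+ chainB (k + 1) := by
  induction k with
  | zero => exact ⟨⟨[2], rfl⟩, ⟨[0], rfl⟩⟩
  | succ k ih => exact ⟨List.suffix_append_self_iff.2 (gammaM_suffix ih.2), gammaM_suffix ih.1⟩

lemma chains_lt_length (k : ℕ) : k < (chainA k).length ∧ k < (chainB k).length := by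
  induction k with
  | zero => simp [chainA, chainB, specialChains]
  | succ k ih =>
    obtain ⟨t, ht⟩ : ∃ t, chainA k = t ++ [0] := by
      cases k with
      | zero => exact ⟨[], rfl⟩
      | succ k => exact ⟨_, chainA_succ k⟩
    have h₁ := length_le_length_gammaM (chainB k)
    have h₂ := length_le_length_gammaM t
    rw [ht] at ih
    simp only [chainA_succ, chainB_succ, ht, gammaM_append, gammaM_zero, List.length_append,
      List.length_cons, List.length_nil] at ih ⊢
    omega

lemma chains_rightSpecial (k : ℕ) :
    RightSpecial 1 2 (chainA k) ∧ RightSpecial 0 2 (chainB k) := by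
  induction k with
  | zero => exact ⟨⟨⟨0, by decide⟩, ⟨3, by decide⟩⟩, ⟨⟨6, by decide⟩, ⟨1, by decide⟩⟩⟩
  | succ k ih =>
    obtain ⟨⟨hA₁, hA₂⟩, ⟨hB₀, hB₂⟩⟩ := ih
    refine ⟨⟨by simpa [chainA_succ] using hB₀.gammaM, by simpa [chainA_succ] using hB₂.gammaM⟩,
      ⟨?_, by simpa [chainB_succ] using hA₁.gammaM⟩⟩
    exact hA₂.gammaM.of_infix ⟨[], [2], by simp [chainB_succ]⟩

lemma specialChain_chainA : SpecialChain 1 2 chainA :=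
  ⟨fun k => (chains_suffix_succ k).1, fun k => (chains_lt_length k).1,
    fun k => (chains_rightSpecial k).1⟩

lemma specialChain_chainB : SpecialChain 0 2 chainB :=
  ⟨fun k => (chains_suffix_succ k).2, fun k => (chains_lt_length k).2,
    fun k => (chains_rightSpecial k).2⟩

namespace SpecialChain

variable {a b : Fin 3} {C : ℕ → List (Fin 3)} (hC : SpecialChain a b C)
include hC

lemma suffix_of_le {k l : ℕ} (h : k ≤ l) : C k <:+ C l := by
  induction l, h using Nat.le_induction with
  | base => exact List.suffix_refl _
  | succ l _ ih => exact ih.trans (hC.suffix_succ l)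

lemma rightSpecial_of_suffix {w : List (Fin 3)} {k : ℕ} (h : w <:+ C k) : RightSpecial a b w :=
  (hC.rightSpecial k).of_suffix h

lemma eq_of_suffix {w w' : List (Fin 3)} {k l : ℕ} (h : w <:+ C k) (h' : w' <:+ C l)
    (hl : w.length = w'.length) : w = w' :=
  (List.suffix_of_suffix_length_le (h.trans (hC.suffix_of_le (le_max_left k l)))
    (h'.trans (hC.suffix_of_le (le_max_right k l))) hl.le).eq_of_length hl

lemma exists_cons_suffix {w : List (Fin 3)} {k : ℕ} (h : w <:+ C k) :
    ∃ l y, y :: w <:+ C l := by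
  obtain ⟨t, ht⟩ := h.trans (hC.suffix_of_le (Nat.le_add_right k w.length))
  have hlen := hC.lt_length (k + w.length)
  rw [← ht, List.length_append] at hlen
  obtain ⟨t, y, rfl⟩ := (List.eq_nil_or_concat' t).resolve_left (by rintro rfl; simp at hlen)
  exact ⟨k + w.length, y, t, by simpa using ht⟩

lemma exists_suffix_length_eq (n : ℕ) : ∃ w, w.length = n ∧ w <:+ C n :=
  ⟨(C n).drop ((C n).length - n), by have := hC.lt_length n; rw [List.length_drop]; omega,
    List.drop_suffix _ _⟩

lemma singleton_suffix_gammaM {v : List (Fin 3)} {x y z₁ z₂ : Fin 3} {k : ℕ} (hv : v ≠ [])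
    (IH : ∀ u, u.length = v.length + 1 → RightSpecial a b u → ∃ l, u <:+ C l)
    (hy : y :: v <:+ C k) (hz₁ : [x] <:+ gammaM [z₁]) (hf₁ : IsFactor (z₁ :: v ++ [a]) Gword)
    (hz₂ : [x] <:+ gammaM [z₂]) (hf₂ : IsFactor (z₂ :: v ++ [b]) Gword) :
    [x] <:+ gammaM [y] := by
  rw [singleton_suffix_gammaM_iff] at hz₁ hz₂ ⊢
  by_cases hz : z₁ = z₂
  · -- `z₁ v` is right special, so it is the suffix of the chain of its length
    subst hz
    obtain ⟨l, hl⟩ := IH (z₁ :: v) rfl ⟨hf₁, hf₂⟩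
    obtain rfl : z₁ = y := List.head_eq_of_cons_eq (hC.eq_of_suffix hl hy rfl)
    exact hz₁
  · -- distinct letters whose images end alike are `1` and `2`, so `2 v` is a factor,
    -- and then `0 v` is not
    have key : ∀ z₁ z₂ : Fin 3, z₁ ≠ z₂ →
        (if z₁ = 0 then (1 : Fin 3) else 2) = (if z₂ = 0 then 1 else 2) →
        (if z₁ = 0 then (1 : Fin 3) else 2) = 2 ∧ (z₁ = 2 ∨ z₂ = 2) := by decide
    obtain ⟨hx, htwo⟩ := key z₁ z₂ hz (hz₁.symm.trans hz₂)
    have h₂ : IsFactor (2 :: v) Gword := by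
      rcases htwo with rfl | rfl
      · exact hf₁.of_infix (List.prefix_append _ _).isInfix
      · exact hf₂.of_infix (List.prefix_append _ _).isInfix
    have hy₀ : y ≠ 0 := by
      rintro rfl
      exact not_isFactor_zero_cons_and_two_cons hv
        ((hC.rightSpecial_of_suffix hy).1.of_infix (List.prefix_append _ _).isInfix) h₂
    rw [hz₁, hx, if_neg hy₀]

lemma exists_suffix_gammaM {w v : List (Fin 3)} (hv : v ≠ [])
    (IH : ∀ u, u.length ≤ v.length + (lead w).length → RightSpecial a b u → ∃ k, u <:+ C k)
    (ha : IsDesubstitution w v a) (hb : IsDesubstitution w v b) :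
    ∃ k, w <:+ gammaM (C k) := by
  obtain ⟨k₀, hk₀⟩ := IH v (by omega) ⟨ha.2.1, hb.2.1⟩
  obtain ⟨k, y, hy⟩ := hC.exists_cons_suffix hk₀
  refine ⟨k, ?_⟩
  rw [ha.1]
  have hlead := length_lead_le w
  rcases h : lead w with _ | ⟨x, _ | ⟨_, _⟩⟩
  · exact gammaM_suffix ((List.suffix_cons y v).trans hy)
  · obtain ⟨z₁, hz₁, hf₁⟩ := ha.2.2 x h
    obtain ⟨z₂, hz₂, hf₂⟩ := hb.2.2 x h
    have hx := hC.singleton_suffix_gammaM hv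
      (fun u hu => IH u (by rw [h, List.length_singleton]; omega)) hy hz₁ hf₁ hz₂ hf₂
    exact (List.suffix_append_self_iff.2 hx).trans (gammaM_cons y v ▸ gammaM_suffix hy)
  · rw [h] at hlead; simp at hlead

end SpecialChain

lemma RightSpecial.exists_suffix_chainA {w : List (Fin 3)} (hw : RightSpecial 1 2 w)
    (IH : ∀ u, u.length < w.length → RightSpecial 0 2 u → ∃ k, u <:+ chainB k) :
    ∃ k, w <:+ chainA k := by
  rcases eq_or_ne w [] with rfl | hne
  · exact ⟨0, List.nil_suffix⟩
  obtain ⟨w, rfl⟩ := hw.exists_eq_append_zero hne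
  obtain ⟨v, h₀, h₂⟩ := hw.exists_isDesubstitution_zero_two
  rcases eq_or_ne v [] with rfl | hv
  · have hw : w = lead w := by simpa using h₀.1
    have hlead := length_lead_le w
    rcases h : lead w with _ | ⟨x, _ | _⟩
    · rw [h] at hw
      exact ⟨0, by rw [hw]; exact List.suffix_refl _⟩
    · obtain ⟨z, hz, hf⟩ := h₀.2.2 x h
      rw [singleton_suffix_gammaM_iff, if_neg (ne_of_isFactor_pair (by simpa using hf))] at hz
      rw [h, hz] at hw
      exact ⟨1, by rw [hw]; exact List.suffix_refl _⟩
    · rw [h] at hlead; simp at hlead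
  · have hlen : w.length = (lead w).length + (gammaM v).length := by
      conv_lhs => rw [h₀.1]
      simp
    have := length_le_length_gammaM v
    obtain ⟨k, hk⟩ := specialChain_chainB.exists_suffix_gammaM hv
      (fun u hu => IH u (by rw [List.length_append, List.length_singleton]; omega)) h₀ h₂
    exact ⟨k + 1, List.suffix_append_self_iff.2 hk⟩

lemma RightSpecial.exists_suffix_chainB {w : List (Fin 3)} (hw : RightSpecial 0 2 w)
    (IH : ∀ u, u.length < w.length → RightSpecial 1 2 u → ∃ k, u <:+ chainA k) :
    ∃ k, w <:+ chainB k := by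
  rcases eq_or_ne w [] with rfl | hne
  · exact ⟨0, List.nil_suffix⟩
  obtain ⟨w, rfl⟩ := hw.exists_eq_append_one hne
  obtain ⟨v, h₁, h₂⟩ := hw.exists_isDesubstitution_one_two
  have hlen : (w ++ [1]).length = (lead (w ++ [1])).length + (gammaM v).length := by
    conv_lhs => rw [h₁.1]
    simp
  rcases eq_or_ne v [] with rfl | hv
  · have hlead := length_lead_le (w ++ [1])
    obtain rfl : w = [] := List.eq_nil_of_length_eq_zero (by
      simp only [List.length_append, List.length_singleton, gammaM_nil, List.length_nil] at hlen
      omega)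
    exact ⟨0, List.suffix_refl _⟩
  · obtain ⟨t, rfl⟩ := RightSpecial.exists_eq_append_zero ⟨h₁.2.1, h₂.2.1⟩ hv
    have := length_le_length_gammaM t
    obtain ⟨k, hk⟩ := specialChain_chainA.exists_suffix_gammaM hv
      (fun u hu => IH u (by
        simp only [List.length_append, gammaM_append, gammaM_zero, List.length_cons,
          List.length_nil] at hlen hu ⊢
        omega)) h₁ h₂
    exact ⟨k + 1, hk⟩

theorem exists_suffix_chain_of_rightSpecial (n : ℕ) : ∀ w : List (Fin 3), w.length = n →
    (RightSpecial 1 2 w → ∃ k, w <:+ chainA k) ∧ (RightSpecial 0 2 w → ∃ k, w <:+ chainB k) := by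
  induction n using Nat.strong_induction_on with
  | _ n IH =>
    rintro w rfl
    exact ⟨fun hw => hw.exists_suffix_chainA fun u hu => (IH _ hu u rfl).2,
      fun hw => hw.exists_suffix_chainB fun u hu => (IH _ hu u rfl).1⟩

lemma RightSpecial.eq_of_length_eq_one_two {w w' : List (Fin 3)} (h : RightSpecial 1 2 w)
    (h' : RightSpecial 1 2 w') (hl : w.length = w'.length) : w = w' := by
  obtain ⟨k, hk⟩ := (exists_suffix_chain_of_rightSpecial _ w rfl).1 h
  obtain ⟨k', hk'⟩ := (exists_suffix_chain_of_rightSpecial _ w' rfl).1 h'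
  exact specialChain_chainA.eq_of_suffix hk hk' hl

lemma RightSpecial.eq_of_length_eq_zero_two {w w' : List (Fin 3)} (h : RightSpecial 0 2 w)
    (h' : RightSpecial 0 2 w') (hl : w.length = w'.length) : w = w' := by
  obtain ⟨k, hk⟩ := (exists_suffix_chain_of_rightSpecial _ w rfl).2 h
  obtain ⟨k', hk'⟩ := (exists_suffix_chain_of_rightSpecial _ w' rfl).2 h'
  exact specialChain_chainB.eq_of_suffix hk hk' hl

lemma nonminimalExtensions_Gword_zero : nonminimalExtensions Gword 0 = {[1], [2]} := by
  ext v
  constructor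
  · rintro ⟨w, a, c, rfl, hw, hlt, -, -⟩
    rw [List.length_eq_zero_iff.mp hw]
    obtain rfl | rfl | rfl := fin3_cases a <;> simp_all [Fin.lt_def]
  · rintro (rfl | rfl)
    · exact ⟨[], 1, 0, rfl, rfl, by decide, ⟨1, by decide⟩, ⟨0, by decide⟩⟩
    · exact ⟨[], 2, 0, rfl, rfl, by decide, ⟨2, by decide⟩, ⟨0, by decide⟩⟩

lemma nonminimalExtensions_Gword_of_pos {n : ℕ} (hn : 0 < n) {A B : List (Fin 3)}
    (hA : A.length = n) (hA' : RightSpecial 1 2 A) (hB : B.length = n)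
    (hB' : RightSpecial 0 2 B) : nonminimalExtensions Gword n = {A ++ [2], B ++ [2]} := by
  ext v
  constructor
  · rintro ⟨w, a, c, rfl, hw, hlt, ha, hc⟩
    obtain rfl | rfl | rfl := fin3_cases a <;> obtain rfl | rfl | rfl := fin3_cases c <;>
      simp only [Fin.lt_def] at hlt <;> norm_num at hlt
    · obtain ⟨t, l, rfl⟩ :=
        (List.eq_nil_or_concat' w).resolve_left (by rintro rfl; rw [List.length_nil] at hw; omega)
      exact absurd (eq_zero_of_isFactor_pair_one (a := l) (ha.of_infix ⟨t, [], by simp⟩))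
        (ne_of_isFactor_pair (a := l) (b := 0) (hc.of_infix ⟨t, [], by simp⟩))
    · rw [RightSpecial.eq_of_length_eq_zero_two ⟨hc, ha⟩ hB' (hw.trans hB.symm)]; simp
    · rw [RightSpecial.eq_of_length_eq_one_two ⟨hc, ha⟩ hA' (hw.trans hA.symm)]; simp
  · rintro (rfl | rfl)
    · exact ⟨A, 2, 1, rfl, hA, by decide, hA'.2, hA'.1⟩
    · exact ⟨B, 2, 0, rfl, hB, by decide, hB'.2, hB'.1⟩

lemma ncard_nonminimalExtensions_Gword (n : ℕ) : (nonminimalExtensions Gword n).ncard = 2 := by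
  rcases Nat.eq_zero_or_pos n with rfl | hn
  · rw [nonminimalExtensions_Gword_zero, Set.ncard_pair (by decide)]
  obtain ⟨A, hA, hAC⟩ := specialChain_chainA.exists_suffix_length_eq n
  obtain ⟨B, hB, hBC⟩ := specialChain_chainB.exists_suffix_length_eq n
  have hA' := specialChain_chainA.rightSpecial_of_suffix hAC
  have hB' := specialChain_chainB.rightSpecial_of_suffix hBC
  rw [nonminimalExtensions_Gword_of_pos hn hA hA' hB hB', Set.ncard_pair]
  obtain ⟨t, rfl⟩ := hA'.exists_eq_append_zero (by rintro rfl; rw [List.length_nil] at hA; omega)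
  obtain ⟨t', rfl⟩ := hB'.exists_eq_append_one (by rintro rfl; rw [List.length_nil] at hB; omega)
  intro h
  simpa using (List.append_inj' (List.append_cancel_right h) rfl).2

/-- The subword complexity of the word `G` is `2n + 1`. -/
theorem Gword_complexity : ∀ n, complexity Gword n = 2 * n + 1 := by
  intro n
  induction n with
  | zero => exact complexity_zero
  | succ n ih => rw [complexity_succ, ih, ncard_nonminimalExtensions_Gword]; ring
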